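/- arXiv:1703.01458 — 2 statements merged into one kernel-verified Lean document; each statement's English description precedes it below -/
import Mathlib

section
/- Let φ be a strictly increasing, strictly convex function in Φ₁ (convex, increasing, φ(0)=0, φ(1)=1) and p ∈ (1,n). If Ω and Ω̃ are bounded convex domains containing the origin such that C_{p,φ}(Ω, Ω₁)/C_p(Ω) = C_{p,φ}(Ω̃, Ω₁)/C_p(Ω̃) for every bounded convex domain Ω₁ containing the origin, then Ω = Ω̃. -/
/-!
Testing the hypothesis with `Ω₁ = Ω` and `Ω₁ = Ω'`, and using `C_{p,φ}(K, K) = C_p(K)`, gives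
`C_{p,φ}(Ω', Ω) = C_p(Ω')` and `C_{p,φ}(Ω, Ω') = C_p(Ω)`. Since `φ` is increasing with
`φ(1) = 1`, the Orlicz–Minkowski inequality turns these into `C_p(Ω) ≤ C_p(Ω')` and
`C_p(Ω') ≤ C_p(Ω)`. So the capacities agree, equality holds in the Orlicz–Minkowski inequality,
and `Ω = c • Ω'` for some `c > 0`; homogeneity of the capacity then forces `c = 1`.
-/

open MeasureTheory Set
open scoped Pointwise

/-- The support function `h_K(u) = sup_{x ∈ K} ⟨x, u⟩` of a set `K ⊆ ℝⁿ`. -/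
noncomputable def suppFn (n : ℕ) (K : Set (EuclideanSpace ℝ (Fin n)))
    (u : EuclideanSpace ℝ (Fin n)) : ℝ :=
  sSup ((fun x => (inner ℝ x u : ℝ)) '' K)

/-- A bounded open convex domain containing the origin. -/
def IsConvexDomain (n : ℕ) (Ω : Set (EuclideanSpace ℝ (Fin n))) : Prop :=
  IsOpen Ω ∧ Convex ℝ Ω ∧ Bornology.IsBounded Ω ∧ (0 : EuclideanSpace ℝ (Fin n)) ∈ Ω

/-- The Orlicz `L_φ` mixed `p`-capacity
`C_{p,φ}(Ω,Ω₁) = (p−1)/(n−p) ∫ φ(h_{Ω₁}/h_Ω) h_Ω dμ_p(Ω,·)`, where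
`μp Ω` is the `p`-capacitary measure of `Ω`. -/
noncomputable def orliczMixedCap (n : ℕ) (p : ℝ) (φ : ℝ → ℝ)
    (μp : Set (EuclideanSpace ℝ (Fin n)) →
      Measure (Metric.sphere (0 : EuclideanSpace ℝ (Fin n)) 1))
    (Ω Ω₁ : Set (EuclideanSpace ℝ (Fin n))) : ℝ :=
  (p - 1) / ((n : ℝ) - p) *
    ∫ u, φ (suppFn n Ω₁ ↑u / suppFn n Ω ↑u) * suppFn n Ω ↑u ∂(μp Ω)

open Filter Topology
open scoped RealInnerProductSpace

lemma bddAbove_image_inner_right {E : Type*} [NormedAddCommGroup E] [InnerProductSpace ℝ E]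
    {K : Set E} (hK : Bornology.IsBounded K) (u : E) : BddAbove ((fun x => ⟪x, u⟫) '' K) :=
  ((innerSLFlip ℝ u).lipschitz.isBounded_image hK).bddAbove

lemma suppFn_pos {n : ℕ} {Ω : Set (EuclideanSpace ℝ (Fin n))} (h0 : Ω ∈ 𝓝 0)
    (hΩ : Bornology.IsBounded Ω) {u : EuclideanSpace ℝ (Fin n)} (hu : u ≠ 0) :
    0 < suppFn n Ω u := by
  have hsmall : ∀ᶠ t : ℝ in 𝓝[>] 0, t • u ∈ Ω :=
    nhdsWithin_le_nhds
      (((continuous_id.smul continuous_const).tendsto' 0 0 (zero_smul ℝ u)).eventually h0)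
  obtain ⟨t, htu, ht⟩ := (hsmall.and self_mem_nhdsWithin).exists
  calc 0 < ⟪t • u, u⟫ := by
        rw [real_inner_smul_left]
        exact mul_pos ht (real_inner_self_pos.2 hu)
    _ ≤ suppFn n Ω u := le_csSup (bddAbove_image_inner_right hΩ u) ⟨_, htu, rfl⟩

lemma orliczMixedCap_self {n : ℕ} {p : ℝ} {φ : ℝ → ℝ} (hφ1 : φ 1 = 1)
    {μp : Set (EuclideanSpace ℝ (Fin n)) →
      Measure (Metric.sphere (0 : EuclideanSpace ℝ (Fin n)) 1)}
    {Ω : Set (EuclideanSpace ℝ (Fin n))} (hΩ : IsConvexDomain n Ω) :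
    orliczMixedCap n p φ μp Ω Ω = (p - 1) / ((n : ℝ) - p) * ∫ u, suppFn n Ω ↑u ∂(μp Ω) := by
  obtain ⟨hopen, -, hbdd, h0⟩ := hΩ
  unfold orliczMixedCap
  congr 2 with u
  rw [div_self (suppFn_pos (hopen.mem_nhds h0) hbdd (ne_zero_of_mem_unit_sphere u)).ne', hφ1,
    one_mul]

lemma le_of_mul_apply_rpow_div_le_self {φ : ℝ → ℝ} (hφm : StrictMonoOn φ (Ici 0)) (hφ1 : φ 1 = 1) {a b e : ℝ} (ha : 0 < a) (hb : 0 < b) (he : 0 < e)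
    (h : a * φ ((b / a) ^ e) ≤ a) : b ≤ a := by
  have hφle : φ ((b / a) ^ e) ≤ φ 1 := by
    rw [hφ1]
    exact (mul_le_iff_le_one_right ha).1 h
  have hrpow : (b / a) ^ e ≤ 1 ^ e := by
    rw [Real.one_rpow]
    exact (hφm.le_iff_le (mem_Ici.2 (by positivity)) (mem_Ici.2 zero_le_one)).1 hφle
  rw [Real.rpow_le_rpow_iff (by positivity) zero_le_one he] at hrpow
  exact (div_le_one ha).1 hrpow

lemma eq_one_of_rpow_mul_eq_self {a c k : ℝ} (ha : 0 < a) (hc : 0 < c) (hk : k ≠ 0)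
    (h : c ^ k * a = a) : c = 1 := by
  have hck : c ^ k = 1 ^ k := by
    rw [Real.one_rpow]
    exact (mul_eq_right₀ ha.ne').1 h
  exact (Real.rpow_left_inj hc.le zero_le_one hk).1 hck

theorem orlicz_mixed_capacity_unique_general (n : ℕ) (p : ℝ) (hpn : p < n)
    (φ : ℝ → ℝ) (hφm : StrictMonoOn φ (Ici 0)) (hφ1 : φ 1 = 1)
    (μp : Set (EuclideanSpace ℝ (Fin n)) →
      Measure (Metric.sphere (0 : EuclideanSpace ℝ (Fin n)) 1))
    (Cp : Set (EuclideanSpace ℝ (Fin n)) → ℝ)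
    (hCppos : ∀ Ω, IsConvexDomain n Ω → 0 < Cp Ω)
    (hPoincare : ∀ Ω, IsConvexDomain n Ω →
      (p - 1) / ((n : ℝ) - p) * ∫ u, suppFn n Ω ↑u ∂(μp Ω) = Cp Ω)
    (hMinkowski : ∀ Ω Ω₁, IsConvexDomain n Ω → IsConvexDomain n Ω₁ →
      orliczMixedCap n p φ μp Ω Ω₁ ≥ Cp Ω * φ ((Cp Ω₁ / Cp Ω) ^ (1 / ((n : ℝ) - p))) ∧
      (orliczMixedCap n p φ μp Ω Ω₁ = Cp Ω * φ ((Cp Ω₁ / Cp Ω) ^ (1 / ((n : ℝ) - p))) →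
        ∃ c : ℝ, 0 < c ∧ Ω₁ = c • Ω))
    (hHom : ∀ Ω, IsConvexDomain n Ω → ∀ c : ℝ, 0 < c →
      Cp (c • Ω) = c ^ ((n : ℝ) - p) * Cp Ω)
    (Ω Ω' : Set (EuclideanSpace ℝ (Fin n)))
    (hΩ : IsConvexDomain n Ω) (hΩ' : IsConvexDomain n Ω')
    (heq : ∀ Ω₁, IsConvexDomain n Ω₁ →
      orliczMixedCap n p φ μp Ω Ω₁ / Cp Ω = orliczMixedCap n p φ μp Ω' Ω₁ / Cp Ω') :
    Ω = Ω' := by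
  have hnp : 0 < (n : ℝ) - p := sub_pos.2 hpn
  have hexp : 0 < 1 / ((n : ℝ) - p) := one_div_pos.2 hnp
  have hself : ∀ K, IsConvexDomain n K → orliczMixedCap n p φ μp K K = Cp K :=
    fun K hK => (orliczMixedCap_self hφ1 hK).trans (hPoincare K hK)
  have hcross : orliczMixedCap n p φ μp Ω' Ω = Cp Ω' := by
    have h := heq Ω hΩ
    rw [hself Ω hΩ, div_self (hCppos Ω hΩ).ne'] at h
    exact (div_eq_one_iff_eq (hCppos Ω' hΩ').ne').1 h.symm
  have hcross' : orliczMixedCap n p φ μp Ω Ω' = Cp Ω := by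
    have h := heq Ω' hΩ'
    rw [hself Ω' hΩ', div_self (hCppos Ω' hΩ').ne'] at h
    exact (div_eq_one_iff_eq (hCppos Ω hΩ).ne').1 h
  have hCp : Cp Ω = Cp Ω' := le_antisymm
    (le_of_mul_apply_rpow_div_le_self hφm hφ1 (hCppos Ω' hΩ') (hCppos Ω hΩ) hexp
      (hcross ▸ (hMinkowski Ω' Ω hΩ' hΩ).1))
    (le_of_mul_apply_rpow_div_le_self hφm hφ1 (hCppos Ω hΩ) (hCppos Ω' hΩ') hexp
      (hcross' ▸ (hMinkowski Ω Ω' hΩ hΩ').1))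
  obtain ⟨c, hc, rfl⟩ := (hMinkowski Ω' Ω hΩ' hΩ).2 <| by
    rw [hcross, hCp, div_self (hCppos Ω' hΩ').ne', Real.one_rpow, hφ1, mul_one]
  have hc1 : c = 1 :=
    eq_one_of_rpow_mul_eq_self (hCppos Ω' hΩ') hc hnp.ne' ((hHom Ω' hΩ' c hc).symm.trans hCp)
  rw [hc1, one_smul]

/-- if `φ ∈ Φ₁` is strictly increasing and strictly convex and two bounded convex
domains `Ω, Ω'` containing the origin satisfy
`C_{p,φ}(Ω,Ω₁)/C_p(Ω) = C_{p,φ}(Ω',Ω₁)/C_p(Ω')` for all such domains `Ω₁`, then `Ω = Ω'`.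
Here the `p`-capacity `Cp` and the `p`-capacitary measures `μp` are linked by the Poincaré
formula, the Orlicz–Minkowski inequality with its equality characterization, and the
homogeneity of the `p`-capacity. -/
theorem orlicz_mixed_capacity_unique (n : ℕ) (p : ℝ) (hp : 1 < p) (hpn : p < n)
    (φ : ℝ → ℝ) (hφm : StrictMonoOn φ (Ici 0)) (hφconv : StrictConvexOn ℝ (Ici 0) φ)
    (hφ0 : φ 0 = 0) (hφ1 : φ 1 = 1)
    (μp : Set (EuclideanSpace ℝ (Fin n)) →
      Measure (Metric.sphere (0 : EuclideanSpace ℝ (Fin n)) 1))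
    (Cp : Set (EuclideanSpace ℝ (Fin n)) → ℝ)
    (hCppos : ∀ Ω, IsConvexDomain n Ω → 0 < Cp Ω)
    (hPoincare : ∀ Ω, IsConvexDomain n Ω →
      (p - 1) / ((n : ℝ) - p) * ∫ u, suppFn n Ω ↑u ∂(μp Ω) = Cp Ω)
    (hMinkowski : ∀ Ω Ω₁, IsConvexDomain n Ω → IsConvexDomain n Ω₁ →
      orliczMixedCap n p φ μp Ω Ω₁ ≥ Cp Ω * φ ((Cp Ω₁ / Cp Ω) ^ (1 / ((n : ℝ) - p))) ∧
      (orliczMixedCap n p φ μp Ω Ω₁ = Cp Ω * φ ((Cp Ω₁ / Cp Ω) ^ (1 / ((n : ℝ) - p))) →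
        ∃ c : ℝ, 0 < c ∧ Ω₁ = c • Ω))
    (hHom : ∀ Ω, IsConvexDomain n Ω → ∀ c : ℝ, 0 < c →
      Cp (c • Ω) = c ^ ((n : ℝ) - p) * Cp Ω)
    (Ω Ω' : Set (EuclideanSpace ℝ (Fin n)))
    (hΩ : IsConvexDomain n Ω) (hΩ' : IsConvexDomain n Ω')
    (heq : ∀ Ω₁, IsConvexDomain n Ω₁ →
      orliczMixedCap n p φ μp Ω Ω₁ / Cp Ω = orliczMixedCap n p φ μp Ω' Ω₁ / Cp Ω') :
    Ω = Ω' :=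
  orlicz_mixed_capacity_unique_general n p hpn φ hφm hφ1 μp Cp hCppos hPoincare hMinkowski hHom Ω Ω'
    hΩ hΩ' heq
end

section
/- Let p ∈ (1,n) and q > 1 with q ≠ n−p. If Ω and Ω̃ are bounded convex domains containing the origin whose L_q p-capacitary measures coincide, μ_{p,q}(Ω,·) = μ_{p,q}(Ω̃,·), then Ω = Ω̃. If q = n−p > 1, then Ω and Ω̃ are dilates of each other. -/
/-!
Integrating `h_{Ω'}^q` against the common measure `μ_{p,q}(Ω,·) = μ_{p,q}(Ω',·)` shows, via the
Poincaré formula, that `C_{p,q}(Ω,Ω') = C_p(Ω')` and symmetrically `C_{p,q}(Ω',Ω) = C_p(Ω)`.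
Writing `t = (n-p-q)/(n-p)`, `s = q/(n-p)` with `t + s = 1`, the two Minkowski inequalities become
`C_p(Ω)^t ≤ C_p(Ω')^t` and the reverse, so `C_p(Ω)^t = C_p(Ω')^t`. This forces equality in the
first Minkowski inequality, hence `Ω' = c • Ω`. If `q ≠ n - p` then `t ≠ 0`, so the capacities
agree, and homogeneity `C_p(c • Ω) = c^(n-p) C_p(Ω)` gives `c = 1`.
-/

open MeasureTheory Set
open scoped Pointwise

/-- The `L_q` mixed `p`-capacity
`C_{p,q}(Ω,Ω₁) = (p−1)/(n−p) ∫ h_{Ω₁}^q h_Ω^{1−q} dμ_p(Ω,·)`. -/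
noncomputable def LqMixedCap (n : ℕ) (p q : ℝ)
    (μp : Set (EuclideanSpace ℝ (Fin n)) →
      Measure (Metric.sphere (0 : EuclideanSpace ℝ (Fin n)) 1))
    (Ω Ω₁ : Set (EuclideanSpace ℝ (Fin n))) : ℝ :=
  (p - 1) / ((n : ℝ) - p) *
    ∫ u, (suppFn n Ω₁ ↑u) ^ q * (suppFn n Ω ↑u) ^ (1 - q) ∂(μp Ω)

/-- The `L_q` `p`-capacitary measure `dμ_{p,q}(Ω,·) = h_Ω^{1−q} dμ_p(Ω,·)`. -/
noncomputable def LqCapMeasure (n : ℕ) (q : ℝ)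
    (μp : Set (EuclideanSpace ℝ (Fin n)) →
      Measure (Metric.sphere (0 : EuclideanSpace ℝ (Fin n)) 1))
    (Ω : Set (EuclideanSpace ℝ (Fin n))) :
    Measure (Metric.sphere (0 : EuclideanSpace ℝ (Fin n)) 1) :=
  (μp Ω).withDensity (fun u => ENNReal.ofReal ((suppFn n Ω ↑u) ^ (1 - q)))

open Metric

section SupportFunction

variable {n : ℕ} {K : Set (EuclideanSpace ℝ (Fin n))}

lemma bddAbove_inner_image_of_subset_closedBall {R : ℝ} (hK : K ⊆ closedBall 0 R)
    (u : EuclideanSpace ℝ (Fin n)) : BddAbove ((fun x => (inner ℝ x u : ℝ)) '' K) := by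
  refine ⟨R * ‖u‖, ?_⟩
  rintro _ ⟨x, hx, rfl⟩
  calc (inner ℝ x u : ℝ) ≤ ‖x‖ * ‖u‖ := real_inner_le_norm x u
    _ ≤ R * ‖u‖ := by gcongr; simpa using hK hx

lemma suppFn_nonneg (hK : Bornology.IsBounded K) (h0 : 0 ∈ K) (u : EuclideanSpace ℝ (Fin n)) :
    0 ≤ suppFn n K u := by
  obtain ⟨R, hR⟩ := hK.subset_closedBall 0
  calc 0 = (inner ℝ (0 : EuclideanSpace ℝ (Fin n)) u : ℝ) := (inner_zero_left u).symm
    _ ≤ suppFn n K u :=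
      le_csSup (bddAbove_inner_image_of_subset_closedBall hR u) (mem_image_of_mem _ h0)

lemma suppFn_le_add_mul_dist {R : ℝ} (hK : K ⊆ closedBall 0 R) (hne : K.Nonempty)
    (u v : EuclideanSpace ℝ (Fin n)) : suppFn n K u ≤ suppFn n K v + R * dist u v := by
  refine csSup_le (hne.image _) ?_
  rintro _ ⟨x, hx, rfl⟩
  have hv : (inner ℝ x v : ℝ) ≤ suppFn n K v :=
    le_csSup (bddAbove_inner_image_of_subset_closedBall hK v) (mem_image_of_mem _ hx)
  have huv : (inner ℝ x (u - v) : ℝ) ≤ R * dist u v :=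
    calc (inner ℝ x (u - v) : ℝ) ≤ ‖x‖ * ‖u - v‖ := real_inner_le_norm _ _
      _ ≤ R * dist u v := by rw [dist_eq_norm]; gcongr; simpa using hK hx
  have hsplit : (inner ℝ x u : ℝ) = inner ℝ x v + inner ℝ x (u - v) := by
    rw [inner_sub_right]; ring
  linarith

lemma lipschitzWith_suppFn {R : ℝ} (hK : K ⊆ closedBall 0 R) (hne : K.Nonempty) :
    LipschitzWith R.toNNReal (suppFn n K) :=
  LipschitzWith.of_le_add_mul' R (suppFn_le_add_mul_dist hK hne)

lemma continuous_suppFn (hK : Bornology.IsBounded K) (hne : K.Nonempty) :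
    Continuous (suppFn n K) := by
  obtain ⟨R, hR⟩ := hK.subset_closedBall 0
  exact (lipschitzWith_suppFn hR hne).continuous

end SupportFunction

section LqCapacity

variable {n : ℕ} {p q : ℝ}
  {μp : Set (EuclideanSpace ℝ (Fin n)) → Measure (sphere (0 : EuclideanSpace ℝ (Fin n)) 1)}
  {A B : Set (EuclideanSpace ℝ (Fin n))}

lemma integral_LqCapMeasure (hA : Bornology.IsBounded A) (h0 : 0 ∈ A)
    (g : sphere (0 : EuclideanSpace ℝ (Fin n)) 1 → ℝ) :
    ∫ u, g u ∂LqCapMeasure n q μp A = ∫ u, suppFn n A ↑u ^ (1 - q) * g u ∂μp A := by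
  have hmeas : Measurable fun u : sphere (0 : EuclideanSpace ℝ (Fin n)) 1 => suppFn n A ↑u :=
    ((continuous_suppFn hA ⟨0, h0⟩).comp continuous_subtype_val).measurable
  rw [LqCapMeasure, integral_withDensity_eq_integral_toReal_smul
    (hmeas.pow_const _).ennreal_ofReal (ae_of_all _ fun _ => ENNReal.ofReal_lt_top)]
  congr 1 with u
  rw [ENNReal.toReal_ofReal (Real.rpow_nonneg (suppFn_nonneg hA h0 _) _), smul_eq_mul]

lemma LqMixedCap_eq_integral_LqCapMeasure (hA : Bornology.IsBounded A) (h0 : 0 ∈ A) :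
    LqMixedCap n p q μp A B =
      (p - 1) / ((n : ℝ) - p) * ∫ u, suppFn n B ↑u ^ q ∂LqCapMeasure n q μp A := by
  simp_rw [LqMixedCap, integral_LqCapMeasure hA h0, mul_comm]

lemma LqMixedCap_self (hA : Bornology.IsBounded A) (h0 : 0 ∈ A) :
    LqMixedCap n p q μp A A = (p - 1) / ((n : ℝ) - p) * ∫ u, suppFn n A ↑u ∂μp A := by
  rw [LqMixedCap]
  congr 2 with u
  rw [← Real.rpow_add' (suppFn_nonneg hA h0 _) (by norm_num), add_sub_cancel, Real.rpow_one]

lemma LqMixedCap_eq_of_LqCapMeasure_eq (hA : Bornology.IsBounded A) (hA0 : 0 ∈ A)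
    (hB : Bornology.IsBounded B) (hB0 : 0 ∈ B)
    (h : LqCapMeasure n q μp A = LqCapMeasure n q μp B) :
    LqMixedCap n p q μp A B = LqMixedCap n p q μp B B := by
  rw [LqMixedCap_eq_integral_LqCapMeasure hA hA0, h,
    ← LqMixedCap_eq_integral_LqCapMeasure hB hB0]

end LqCapacity

lemma Real.rpow_eq_rpow_of_mul_rpow_le {a b t s : ℝ} (ha : 0 < a) (hb : 0 < b) (hts : t + s = 1)
    (hab : a ^ t * b ^ s ≤ b) (hba : b ^ t * a ^ s ≤ a) : a ^ t = b ^ t := by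
  have key : ∀ x y : ℝ, 0 < y → x ^ t * y ^ s ≤ y → x ^ t ≤ y ^ t := fun x y hy hxy =>
    le_of_mul_le_mul_right (by rwa [← Real.rpow_add hy, hts, Real.rpow_one])
      (Real.rpow_pos_of_pos hy s)
  exact le_antisymm (key a b hb hab) (key b a ha hba)

theorem Lq_capacitary_measure_unique_general (n : ℕ) (p q : ℝ) (hpn : p < n)
    (μp : Set (EuclideanSpace ℝ (Fin n)) →
      Measure (Metric.sphere (0 : EuclideanSpace ℝ (Fin n)) 1))
    (Cp : Set (EuclideanSpace ℝ (Fin n)) → ℝ)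
    (hCppos : ∀ Ω, IsConvexDomain n Ω → 0 < Cp Ω)
    (hPoincare : ∀ Ω, IsConvexDomain n Ω →
      (p - 1) / ((n : ℝ) - p) * ∫ u, suppFn n Ω ↑u ∂(μp Ω) = Cp Ω)
    (hMinkowski : ∀ Ω Ω₁, IsConvexDomain n Ω → IsConvexDomain n Ω₁ →
      LqMixedCap n p q μp Ω Ω₁ ≥
        Cp Ω ^ (((n : ℝ) - p - q) / ((n : ℝ) - p)) * Cp Ω₁ ^ (q / ((n : ℝ) - p)) ∧
      (LqMixedCap n p q μp Ω Ω₁ =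
          Cp Ω ^ (((n : ℝ) - p - q) / ((n : ℝ) - p)) * Cp Ω₁ ^ (q / ((n : ℝ) - p)) →
        ∃ c : ℝ, 0 < c ∧ Ω₁ = c • Ω))
    (hHom : ∀ Ω, IsConvexDomain n Ω → ∀ c : ℝ, 0 < c →
      Cp (c • Ω) = c ^ ((n : ℝ) - p) * Cp Ω)
    (Ω Ω' : Set (EuclideanSpace ℝ (Fin n)))
    (hΩ : IsConvexDomain n Ω) (hΩ' : IsConvexDomain n Ω')
    (hμeq : LqCapMeasure n q μp Ω = LqCapMeasure n q μp Ω') :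
    (q ≠ (n : ℝ) - p → Ω = Ω') ∧
    (q = (n : ℝ) - p → ∃ c : ℝ, 0 < c ∧ Ω' = c • Ω) := by
  have hnp : (n : ℝ) - p ≠ 0 := by linarith
  obtain ⟨hΩb, hΩ0⟩ := hΩ.2.2
  obtain ⟨hΩ'b, hΩ'0⟩ := hΩ'.2.2
  have hcap : LqMixedCap n p q μp Ω Ω' = Cp Ω' := by
    rw [LqMixedCap_eq_of_LqCapMeasure_eq hΩb hΩ0 hΩ'b hΩ'0 hμeq, LqMixedCap_self hΩ'b hΩ'0,
      hPoincare Ω' hΩ']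
  have hcap' : LqMixedCap n p q μp Ω' Ω = Cp Ω := by
    rw [LqMixedCap_eq_of_LqCapMeasure_eq hΩ'b hΩ'0 hΩb hΩ0 hμeq.symm, LqMixedCap_self hΩb hΩ0,
      hPoincare Ω hΩ]
  set t := ((n : ℝ) - p - q) / ((n : ℝ) - p)
  have hts : t + q / ((n : ℝ) - p) = 1 := by rw [← add_div, div_eq_one_iff_eq hnp]; ring
  have hpow : Cp Ω ^ t = Cp Ω' ^ t := Real.rpow_eq_rpow_of_mul_rpow_le (hCppos Ω hΩ)
    (hCppos Ω' hΩ') hts (hcap ▸ (hMinkowski Ω Ω' hΩ hΩ').1) (hcap' ▸ (hMinkowski Ω' Ω hΩ' hΩ).1)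
  obtain ⟨c, hc, rfl⟩ := (hMinkowski Ω Ω' hΩ hΩ').2 <| by
    rw [hcap, hpow, ← Real.rpow_add (hCppos Ω' hΩ'), hts, Real.rpow_one]
  refine ⟨fun hqn => ?_, fun _ => ⟨c, hc, rfl⟩⟩
  have ht : t ≠ 0 := div_ne_zero (by contrapose! hqn; linarith) hnp
  have hCp : Cp Ω = Cp (c • Ω) :=
    (Real.rpow_left_inj (hCppos Ω hΩ).le (hCppos _ hΩ').le ht).1 hpow
  have hcpow : c ^ ((n : ℝ) - p) = 1 ^ ((n : ℝ) - p) := by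
    rw [Real.one_rpow, ← mul_eq_right₀ (hCppos Ω hΩ).ne', ← hHom Ω hΩ c hc, hCp]
  rw [(Real.rpow_left_inj hc.le zero_le_one hnp).1 hcpow, one_smul]

/-- for `p ∈ (1,n)` and `q > 1`, if two bounded convex domains containing the
origin have the same `L_q` `p`-capacitary measure, then they coincide when `q ≠ n − p`, and
they are dilates of each other when `q = n − p`.  The `p`-capacity `Cp` and the `p`-capacitary
measures `μp` are linked by the Poincaré formula, the `L_q` `p`-capacitary Minkowski
inequality with its equality characterization, and the homogeneity of the `p`-capacity. -/
theorem Lq_capacitary_measure_unique (n : ℕ) (p q : ℝ) (hp : 1 < p) (hpn : p < n) (hq : 1 < q)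
    (μp : Set (EuclideanSpace ℝ (Fin n)) →
      Measure (Metric.sphere (0 : EuclideanSpace ℝ (Fin n)) 1))
    (Cp : Set (EuclideanSpace ℝ (Fin n)) → ℝ)
    (hCppos : ∀ Ω, IsConvexDomain n Ω → 0 < Cp Ω)
    (hPoincare : ∀ Ω, IsConvexDomain n Ω →
      (p - 1) / ((n : ℝ) - p) * ∫ u, suppFn n Ω ↑u ∂(μp Ω) = Cp Ω)
    (hMinkowski : ∀ Ω Ω₁, IsConvexDomain n Ω → IsConvexDomain n Ω₁ →
      LqMixedCap n p q μp Ω Ω₁ ≥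
        Cp Ω ^ (((n : ℝ) - p - q) / ((n : ℝ) - p)) * Cp Ω₁ ^ (q / ((n : ℝ) - p)) ∧
      (LqMixedCap n p q μp Ω Ω₁ =
          Cp Ω ^ (((n : ℝ) - p - q) / ((n : ℝ) - p)) * Cp Ω₁ ^ (q / ((n : ℝ) - p)) →
        ∃ c : ℝ, 0 < c ∧ Ω₁ = c • Ω))
    (hHom : ∀ Ω, IsConvexDomain n Ω → ∀ c : ℝ, 0 < c →
      Cp (c • Ω) = c ^ ((n : ℝ) - p) * Cp Ω)
    (Ω Ω' : Set (EuclideanSpace ℝ (Fin n)))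
    (hΩ : IsConvexDomain n Ω) (hΩ' : IsConvexDomain n Ω')
    (hμeq : LqCapMeasure n q μp Ω = LqCapMeasure n q μp Ω') :
    (q ≠ (n : ℝ) - p → Ω = Ω') ∧
    (q = (n : ℝ) - p → ∃ c : ℝ, 0 < c ∧ Ω' = c • Ω) :=
  Lq_capacitary_measure_unique_general n p q hpn μp Cp hCppos hPoincare hMinkowski hHom Ω Ω' hΩ hΩ'
    hμeq
end
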